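/- arXiv:1902.10588 — 2 statements merged into one kernel-verified Lean document; each statement's English description precedes it below -/
import Mathlib

section
/- Let P be a Markov operator on probability measures on a measurable space Ω satisfying Doeblin's condition: there exist α ∈ (0,1) and a probability measure ν with P μ ≥ α ν for every probability measure μ. Then for any two probability measures μ₁, μ₂, one has ‖P μ₁ − P μ₂‖_TV ≤ (1−α) ‖μ₁ − μ₂‖_TV. -/
open MeasureTheory

/-- Total variation norm of a finite signed measure. -/
noncomputable def tvNorm {Ω : Type*} [MeasurableSpace Ω] (s : SignedMeasure Ω) : ℝ :=
  (s.totalVariation Set.univ).toReal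

section Aux

open VectorMeasure

variable {Ω : Type*} [MeasurableSpace Ω]

lemma tvNorm_eq_of_spec (s : SignedMeasure Ω) {i : Set Ω} (hi₁ : MeasurableSet i)
    (hi₂ : 0 ≤[i] s) (hi₃ : s ≤[iᶜ] 0)
    (hpos : s.toJordanDecomposition.posPart = s.toMeasureOfZeroLE i hi₁ hi₂)
    (hneg : s.toJordanDecomposition.negPart = s.toMeasureOfLEZero iᶜ hi₁.compl hi₃) :
    tvNorm s = s i - s iᶜ := by
  rw [tvNorm, SignedMeasure.totalVariation, Measure.add_apply, hpos, hneg,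
    SignedMeasure.toMeasureOfZeroLE_apply _ hi₂ hi₁ MeasurableSet.univ,
    SignedMeasure.toMeasureOfLEZero_apply _ hi₃ hi₁.compl MeasurableSet.univ,
    ← ENNReal.coe_add, ENNReal.coe_toReal, NNReal.coe_add, NNReal.coe_mk, NNReal.coe_mk]
  simp only [Set.inter_univ]
  ring

lemma signedMeasure_nonneg_apply {v : SignedMeasure Ω} (hv : 0 ≤ v) (j : Set Ω) :
    (0 : ℝ) ≤ v j := by
  by_cases hj : MeasurableSet j
  · simpa using VectorMeasure.le_iff.mp hv j hj
  · simp [VectorMeasure.not_measurable _ hj]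

lemma signedMeasure_le_univ {v : SignedMeasure Ω} (hv : 0 ≤ v) {j : Set Ω}
    (hj : MeasurableSet j) : v j ≤ v Set.univ := by
  have h1 : v Set.univ = v j + v jᶜ := by
    rw [← VectorMeasure.of_union disjoint_compl_right hj hj.compl, Set.union_compl_self]
  have h2 : (0 : ℝ) ≤ v jᶜ := signedMeasure_nonneg_apply hv jᶜ
  linarith

lemma tvNorm_sub_le (a b : SignedMeasure Ω) (ha : 0 ≤ a) (hb : 0 ≤ b) :
    tvNorm (a - b) ≤ a Set.univ + b Set.univ := by
  obtain ⟨i, hi₁, hi₂, hi₃, hpos, hneg⟩ := (a - b).toJordanDecomposition_spec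
  rw [tvNorm_eq_of_spec _ hi₁ hi₂ hi₃ hpos hneg, VectorMeasure.sub_apply,
    VectorMeasure.sub_apply]
  have h1 := signedMeasure_le_univ ha hi₁
  have h2 := signedMeasure_le_univ hb hi₁.compl
  have h3 := signedMeasure_nonneg_apply ha iᶜ
  have h4 := signedMeasure_nonneg_apply hb i
  linarith

lemma signedMeasure_smul_nonneg {c : ℝ} (hc : 0 ≤ c) {v : SignedMeasure Ω} (hv : 0 ≤ v) :
    0 ≤ c • v := by
  rw [VectorMeasure.le_iff] at hv ⊢
  intro j hj
  have := hv j hj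
  simp only [VectorMeasure.smul_apply, VectorMeasure.zero_apply, smul_eq_mul] at *
  exact mul_nonneg hc this

end Aux

/-- Doeblin's condition implies a `(1-α)` contraction in total
variation for differences of probability measures. -/
theorem doeblin_contraction
    {Ω : Type*} [MeasurableSpace Ω]
    (P : SignedMeasure Ω →ₗ[ℝ] SignedMeasure Ω)
    -- P preserves positivity
    (hPos : ∀ s : SignedMeasure Ω, 0 ≤ s → 0 ≤ P s)
    -- P preserves total mass
    (hMass : ∀ s : SignedMeasure Ω, (P s) Set.univ = s Set.univ)
    (α : ℝ) (hα : α ∈ Set.Ioo (0 : ℝ) 1)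
    (ν : Measure Ω) [IsProbabilityMeasure ν]
    -- Doeblin's condition: P μ ≥ α ν for every probability measure μ
    (hDoeblin : ∀ (μ : Measure Ω) [IsProbabilityMeasure μ],
      α • ν.toSignedMeasure ≤ P μ.toSignedMeasure)
    (μ₁ μ₂ : Measure Ω) [IsProbabilityMeasure μ₁] [IsProbabilityMeasure μ₂] :
    tvNorm (P μ₁.toSignedMeasure - P μ₂.toSignedMeasure)
      ≤ (1 - α) * tvNorm (μ₁.toSignedMeasure - μ₂.toSignedMeasure) := by
  obtain ⟨hα0, hα1⟩ := hα
  set s : SignedMeasure Ω := μ₁.toSignedMeasure - μ₂.toSignedMeasure with hs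
  obtain ⟨i, hi₁, hi₂, hi₃, hpos, hneg⟩ := s.toJordanDecomposition_spec
  have hPmap : P μ₁.toSignedMeasure - P μ₂.toSignedMeasure = P s := (map_sub P _ _).symm
  have hs_univ : s Set.univ = 0 := by
    rw [hs, VectorMeasure.sub_apply,
      Measure.toSignedMeasure_apply_measurable MeasurableSet.univ,
      Measure.toSignedMeasure_apply_measurable MeasurableSet.univ,
      probReal_univ, probReal_univ, sub_self]
  have hsplit : s Set.univ = s i + s iᶜ := by
    rw [← VectorMeasure.of_union disjoint_compl_right hi₁ hi₁.compl, Set.union_compl_self]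
  set c : ℝ := s i with hc
  have hc0 : 0 ≤ c := s.nonneg_of_zero_le_restrict hi₂
  have hsc : s iᶜ = -c := by linarith [hsplit, hs_univ]
  have htv : tvNorm s = 2 * c := by
    rw [tvNorm_eq_of_spec s hi₁ hi₂ hi₃ hpos hneg, hsc]; ring
  set p : Measure Ω := s.toMeasureOfZeroLE i hi₁ hi₂ with hp
  set q : Measure Ω := s.toMeasureOfLEZero iᶜ hi₁.compl hi₃ with hq
  have hpq : p.toSignedMeasure - q.toSignedMeasure = s := by
    ext A hA
    rw [VectorMeasure.sub_apply, Measure.toSignedMeasure_apply_measurable hA,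
      Measure.toSignedMeasure_apply_measurable hA, hp, hq, measureReal_def, measureReal_def,
      SignedMeasure.toMeasureOfZeroLE_apply _ hi₂ hi₁ hA,
      SignedMeasure.toMeasureOfLEZero_apply _ hi₃ hi₁.compl hA]
    simp only [ENNReal.coe_toReal, NNReal.coe_mk, sub_neg_eq_add]
    rw [← VectorMeasure.of_union _ (hi₁.inter hA) (hi₁.compl.inter hA),
      Set.inter_comm i, Set.inter_comm iᶜ, Set.inter_union_compl]
    exact (disjoint_compl_right.inf_left _).inf_right _
  have hp_univ : p Set.univ = ENNReal.ofReal c := by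
    rw [hp, SignedMeasure.toMeasureOfZeroLE_apply _ hi₂ hi₁ MeasurableSet.univ]
    rw [ENNReal.ofReal]
    congr 1
    ext
    simp [Real.coe_toNNReal _ hc0, Set.inter_univ, hc]
    exact hc0
  have hq_univ : q Set.univ = ENNReal.ofReal c := by
    rw [hq, SignedMeasure.toMeasureOfLEZero_apply _ hi₃ hi₁.compl MeasurableSet.univ]
    rw [ENNReal.ofReal]
    congr 1
    ext
    simp [Real.coe_toNNReal _ hc0, Set.inter_univ, hsc]
  rcases eq_or_lt_of_le hc0 with hceq | hcpos
  · -- degenerate case c = 0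
    have hp0 : p = 0 := by
      rw [← Measure.measure_univ_eq_zero, hp_univ, ← hceq]; simp
    have hq0 : q = 0 := by
      rw [← Measure.measure_univ_eq_zero, hq_univ, ← hceq]; simp
    have hs0 : s = 0 := by
      ext A hA
      rw [← hpq, VectorMeasure.sub_apply, Measure.toSignedMeasure_apply_measurable hA,
        Measure.toSignedMeasure_apply_measurable hA, hp0, hq0]
      simp
    rw [hPmap, hs0, map_zero]
    simp [tvNorm, SignedMeasure.totalVariation_zero]
  · -- main case c > 0
    have hcne : c ≠ 0 := ne_of_gt hcpos
    have hofc0 : ENNReal.ofReal c ≠ 0 := by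
      simp [ENNReal.ofReal_eq_zero, not_le, hcpos]
    have hofctop : ENNReal.ofReal c ≠ ⊤ := ENNReal.ofReal_ne_top
    set ρ₁ : Measure Ω := (ENNReal.ofReal c)⁻¹ • p with hρ₁def
    set ρ₂ : Measure Ω := (ENNReal.ofReal c)⁻¹ • q with hρ₂def
    have hρ₁prob : IsProbabilityMeasure ρ₁ := by
      constructor
      rw [hρ₁def, Measure.smul_apply, hp_univ, smul_eq_mul,
        ENNReal.inv_mul_cancel hofc0 hofctop]
    have hρ₂prob : IsProbabilityMeasure ρ₂ := by
      constructor
      rw [hρ₂def, Measure.smul_apply, hq_univ, smul_eq_mul,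
        ENNReal.inv_mul_cancel hofc0 hofctop]
    haveI := hρ₁prob
    haveI := hρ₂prob
    have hpts : p.toSignedMeasure = c • ρ₁.toSignedMeasure := by
      ext A hA
      rw [VectorMeasure.smul_apply, Measure.toSignedMeasure_apply_measurable hA,
        Measure.toSignedMeasure_apply_measurable hA, hρ₁def, measureReal_def, measureReal_def,
        Measure.smul_apply]
      simp only [smul_eq_mul]
      rw [ENNReal.toReal_mul, ENNReal.toReal_inv, ENNReal.toReal_ofReal hc0,
        ← mul_assoc, mul_inv_cancel₀ hcne, one_mul]
    have hqts : q.toSignedMeasure = c • ρ₂.toSignedMeasure := by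
      ext A hA
      rw [VectorMeasure.smul_apply, Measure.toSignedMeasure_apply_measurable hA,
        Measure.toSignedMeasure_apply_measurable hA, hρ₂def, measureReal_def, measureReal_def,
        Measure.smul_apply]
      simp only [smul_eq_mul]
      rw [ENNReal.toReal_mul, ENNReal.toReal_inv, ENNReal.toReal_ofReal hc0,
        ← mul_assoc, mul_inv_cancel₀ hcne, one_mul]
    set a : SignedMeasure Ω := P ρ₁.toSignedMeasure - α • ν.toSignedMeasure with hadef
    set b : SignedMeasure Ω := P ρ₂.toSignedMeasure - α • ν.toSignedMeasure with hbdef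
    have key : P μ₁.toSignedMeasure - P μ₂.toSignedMeasure = (c • a) - (c • b) := by
      rw [hPmap, ← hpq, map_sub, hpts, hqts, LinearMap.map_smul, LinearMap.map_smul,
        hadef, hbdef, smul_sub, smul_sub]
      abel
    have ha : 0 ≤ a := by
      rw [hadef, sub_nonneg]
      exact hDoeblin ρ₁
    have hb : 0 ≤ b := by
      rw [hbdef, sub_nonneg]
      exact hDoeblin ρ₂
    have hν1 : ν.toSignedMeasure Set.univ = 1 := by
      rw [Measure.toSignedMeasure_apply_measurable MeasurableSet.univ, probReal_univ]
    have hauniv : a Set.univ = 1 - α := by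
      rw [hadef, VectorMeasure.sub_apply, hMass, VectorMeasure.smul_apply,
        Measure.toSignedMeasure_apply_measurable MeasurableSet.univ, probReal_univ,
        hν1, smul_eq_mul, mul_one]
    have hbuniv : b Set.univ = 1 - α := by
      rw [hbdef, VectorMeasure.sub_apply, hMass, VectorMeasure.smul_apply,
        Measure.toSignedMeasure_apply_measurable MeasurableSet.univ, probReal_univ,
        hν1, smul_eq_mul, mul_one]
    have hbound := tvNorm_sub_le (c • a) (c • b)
      (signedMeasure_smul_nonneg hc0 ha) (signedMeasure_smul_nonneg hc0 hb)
    rw [VectorMeasure.smul_apply, VectorMeasure.smul_apply, hauniv, hbuniv] at hbound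
    rw [key, htv]
    calc tvNorm (c • a - c • b) ≤ c • (1 - α) + c • (1 - α) := hbound
      _ = (1 - α) * (2 * c) := by simp only [smul_eq_mul]; ring
end

section
/- Let Φ ∈ C²(ℝ^d) with Hessian bounded by C on the ball of radius 9R, where R = max{|x₀|, |x₁|}. There exists t₁ > 0, explicitly any t₁ satisfying C t₁² e^{C t₁²} ≤ 1/4, t₁ ≤ √R/√(2C_{2R}), and t₁ ≤ 2√R/√(C_{9R}) (with C_{ρ} = max_{|x|≤ρ}|∇Φ(x)|), such that for every 0 < t ≤ t₁ there exists v₀ with |v₀| ≤ 4R and X_t(x₀, v₀/t) = x₁, where X is the flow of ẋ = v, v̇ = −∇Φ(x). -/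
open MeasureTheory
open Set

section helpers

variable {E : Type*} [NormedAddCommGroup E] [NormedSpace ℝ E]

lemma taylor_aux [CompleteSpace E] (x u g : ℝ → E)
    (hx : ∀ r, HasDerivAt x (u r) r) (hu : ∀ r, HasDerivAt u (g r) r)
    (hg : Continuous g) (s : ℝ) :
    x s = x 0 + s • u 0 + ∫ r in (0:ℝ)..s, (s - r) • g r := by
  have key : ∀ r : ℝ, HasDerivAt (fun r => x r + (s - r) • u r) ((s - r) • g r) r := by
    intro r
    have hc : HasDerivAt (fun y : ℝ => s - y) (-1) r := by
      simpa using (hasDerivAt_id' r).const_sub s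
    have h1 := hc.smul (hu r)
    have h2 := (hx r).add h1
    convert h2 using 1
    case e'_8 => rfl
    simp [neg_one_smul]
  have hcont : Continuous fun r => (s - r) • g r :=
    (continuous_const.sub continuous_id).smul hg
  have hFTC := intervalIntegral.integral_eq_sub_of_hasDerivAt
      (f := fun r => x r + (s - r) • u r) (fun r _ => key r) (hcont.intervalIntegrable 0 s)
  simp only [sub_self, zero_smul, add_zero, sub_zero] at hFTC
  rw [hFTC]; abel

lemma integral_bound (g : ℝ → E) (hg : Continuous g) {s K : ℝ} (hs : 0 ≤ s)
    (hK : ∀ r ∈ Icc (0:ℝ) s, ‖g r‖ ≤ K) :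
    ‖∫ r in (0:ℝ)..s, (s - r) • g r‖ ≤ K * s ^ 2 / 2 := by
  have hK0 : 0 ≤ K := le_trans (norm_nonneg _) (hK 0 ⟨le_refl _, hs⟩)
  have h1 := intervalIntegral.norm_integral_le_integral_norm
    (f := fun r => (s - r) • g r) (μ := volume) (a := 0) (b := s) hs
  have h2 : (∫ r in (0:ℝ)..s, ‖(s - r) • g r‖) ≤ ∫ r in (0:ℝ)..s, (s - r) * K := by
    apply intervalIntegral.integral_mono_on hs
    · exact (((continuous_const.sub continuous_id).smul hg).norm).intervalIntegrable 0 s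
    · exact ((continuous_const.sub continuous_id).mul continuous_const).intervalIntegrable 0 s
    · intro r hr
      rw [norm_smul, Real.norm_eq_abs, abs_of_nonneg (by linarith [hr.2])]
      exact mul_le_mul_of_nonneg_left (hK r hr) (by linarith [hr.2])
  have h3 : (∫ r in (0:ℝ)..s, (s - r) * K) = K * s ^ 2 / 2 := by
    rw [intervalIntegral.integral_mul_const,
      intervalIntegral.integral_sub intervalIntegrable_const intervalIntegral.intervalIntegrable_id,
      intervalIntegral.integral_const, integral_id]
    simp; ring
  linarith

end helpers

set_option maxHeartbeats 1000000

/-- shooting lemma for the Hamiltonian flow. Any `t₁` satisfying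
the three explicit smallness conditions works: for every `0 < t ≤ t₁` there is
a velocity `v₀` with `|v₀| ≤ 4R` such that `X_t(x₀, v₀/t) = x₁`. -/
theorem hamiltonian_shooting
    (d : ℕ) (Φ : EuclideanSpace ℝ (Fin d) → ℝ) (hΦ : ContDiff ℝ 2 Φ)
    (x₀ x₁ : EuclideanSpace ℝ (Fin d))
    (R : ℝ) (hR : R = max ‖x₀‖ ‖x₁‖) (hRpos : 0 < R)
    -- the global-in-time flow of ẋ = v, v̇ = -∇Φ(x)
    (X V : EuclideanSpace ℝ (Fin d) → EuclideanSpace ℝ (Fin d) → ℝ →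
      EuclideanSpace ℝ (Fin d))
    (hflow : ∀ (x w : EuclideanSpace ℝ (Fin d)),
      X x w 0 = x ∧ V x w 0 = w ∧
      ∀ t : ℝ, HasDerivAt (X x w) (V x w t) t ∧
        HasDerivAt (V x w) (-(gradient Φ (X x w t))) t)
    -- C bounds the Hessian of Φ on the ball of radius 9R
    (C : ℝ) (hC : 0 ≤ C)
    (hCbound : ∀ x : EuclideanSpace ℝ (Fin d), ‖x‖ ≤ 9 * R →
      ‖fderiv ℝ (fun y => gradient Φ y) x‖ ≤ C)
    -- C₂ and C₉ bound |∇Φ| on the balls of radii 2R and 9R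
    (C2 C9 : ℝ) (hC2 : 0 ≤ C2) (hC9 : 0 ≤ C9)
    (hC2bound : ∀ x : EuclideanSpace ℝ (Fin d), ‖x‖ ≤ 2 * R → ‖gradient Φ x‖ ≤ C2)
    (hC9bound : ∀ x : EuclideanSpace ℝ (Fin d), ‖x‖ ≤ 9 * R → ‖gradient Φ x‖ ≤ C9)
    (t₁ : ℝ) (ht₁pos : 0 < t₁)
    (ht₁a : C * t₁ ^ 2 * Real.exp (C * t₁ ^ 2) ≤ 1 / 4)
    (ht₁b : C2 ≠ 0 → t₁ ≤ Real.sqrt R / Real.sqrt (2 * C2))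
    (ht₁c : C9 ≠ 0 → t₁ ≤ 2 * Real.sqrt R / Real.sqrt C9) :
    ∀ t : ℝ, 0 < t → t ≤ t₁ →
      ∃ v₀ : EuclideanSpace ℝ (Fin d), ‖v₀‖ ≤ 4 * R ∧ X x₀ (t⁻¹ • v₀) t = x₁ := by
  intro t ht ht'
  have htne : t ≠ 0 := ne_of_gt ht
  -- smallness consequences
  have hCt : C * t ^ 2 ≤ 1 / 4 := by
    have h1 : C * t ^ 2 ≤ C * t₁ ^ 2 :=
      mul_le_mul_of_nonneg_left (by nlinarith) hC
    have h2 : C * t₁ ^ 2 ≤ C * t₁ ^ 2 * Real.exp (C * t₁ ^ 2) :=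
      le_mul_of_one_le_right (by positivity) (Real.one_le_exp (by positivity))
    linarith
  have hC9t : C9 * t ^ 2 ≤ 4 * R := by
    rcases eq_or_ne C9 0 with h | h
    · rw [h]; nlinarith
    · have h1 : t ≤ 2 * Real.sqrt R / Real.sqrt C9 := le_trans ht' (ht₁c h)
      have hC9pos : 0 < C9 := lt_of_le_of_ne hC9 (Ne.symm h)
      have hs9 : 0 < Real.sqrt C9 := Real.sqrt_pos.mpr hC9pos
      have h2 : t * Real.sqrt C9 ≤ 2 * Real.sqrt R := by
        rw [div_eq_mul_inv] at h1
        calc t * Real.sqrt C9 ≤ (2 * Real.sqrt R * (Real.sqrt C9)⁻¹) * Real.sqrt C9 :=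
              mul_le_mul_of_nonneg_right h1 hs9.le
          _ = 2 * Real.sqrt R := by field_simp
      have h3 : (t * Real.sqrt C9) ^ 2 ≤ (2 * Real.sqrt R) ^ 2 :=
        pow_le_pow_left₀ (by positivity) h2 2
      have e1 : (t * Real.sqrt C9) ^ 2 = C9 * t ^ 2 := by
        rw [mul_pow, Real.sq_sqrt hC9]; ring
      have e2 : (2 * Real.sqrt R) ^ 2 = 4 * R := by
        rw [mul_pow, Real.sq_sqrt hRpos.le]; norm_num
      rw [e1, e2] at h3; exact h3
  -- gradient smoothness
  have hgrad1 : ContDiff ℝ 1 (gradient Φ) := by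
    have h1 : ContDiff ℝ 1 (fun y => fderiv ℝ Φ y) := hΦ.fderiv_right (by norm_num)
    exact ((InnerProductSpace.toDual ℝ
      (EuclideanSpace ℝ (Fin d))).symm.toLinearIsometry.toContinuousLinearMap.contDiff).comp h1
  have hgradcont : Continuous (gradient Φ) := hgrad1.continuous
  have hgraddiff : Differentiable ℝ (gradient Φ) := hgrad1.differentiable one_ne_zero
  have hlip : ∀ a b : EuclideanSpace ℝ (Fin d), ‖a‖ ≤ 9 * R → ‖b‖ ≤ 9 * R →
      ‖gradient Φ a - gradient Φ b‖ ≤ C * ‖a - b‖ := by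
    intro a b ha hb
    exact (convex_closedBall (0 : EuclideanSpace ℝ (Fin d))
        (9 * R)).norm_image_sub_le_of_norm_fderiv_le
      (fun y _ => hgraddiff y)
      (fun y hy => hCbound y (by simpa [Metric.mem_closedBall, dist_zero_right] using hy))
      (by simpa [Metric.mem_closedBall, dist_zero_right] using hb)
      (by simpa [Metric.mem_closedBall, dist_zero_right] using ha)
  -- flow facts
  set xv : EuclideanSpace ℝ (Fin d) → ℝ → EuclideanSpace ℝ (Fin d) :=
    fun v => X x₀ (t⁻¹ • v) with hxvdef
  have hx0 : ∀ v, xv v 0 = x₀ := fun v => (hflow x₀ (t⁻¹ • v)).1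
  have hu0 : ∀ v, V x₀ (t⁻¹ • v) 0 = t⁻¹ • v := fun v => (hflow x₀ (t⁻¹ • v)).2.1
  have hxd : ∀ v r, HasDerivAt (xv v) (V x₀ (t⁻¹ • v) r) r :=
    fun v r => ((hflow x₀ (t⁻¹ • v)).2.2 r).1
  have hud : ∀ v r, HasDerivAt (V x₀ (t⁻¹ • v)) (-(gradient Φ (xv v r))) r :=
    fun v r => ((hflow x₀ (t⁻¹ • v)).2.2 r).2
  have hxcont : ∀ v, Continuous (xv v) := by
    intro v
    have hd : Differentiable ℝ (xv v) := fun r => (hxd v r).differentiableAt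
    exact hd.continuous
  have hgx_cont : ∀ v, Continuous (fun r => -(gradient Φ (xv v r))) :=
    fun v => (hgradcont.comp (hxcont v)).neg
  have htay : ∀ v s, xv v s =
      x₀ + s • (t⁻¹ • v) + ∫ r in (0:ℝ)..s, (s - r) • (-(gradient Φ (xv v r))) := by
    intro v s
    have h := taylor_aux (xv v) (V x₀ (t⁻¹ • v)) (fun r => -(gradient Φ (xv v r)))
      (hxd v) (hud v) (hgx_cont v) s
    rw [hx0 v, hu0 v] at h
    exact h
  -- norm of initial velocity term
  have hsm : ∀ (v : EuclideanSpace ℝ (Fin d)) (s : ℝ), 0 ≤ s → s ≤ t →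
      ‖s • (t⁻¹ • v)‖ ≤ ‖v‖ := by
    intro v s hs0 hst
    rw [norm_smul, norm_smul, Real.norm_eq_abs, Real.norm_eq_abs,
      abs_of_nonneg hs0, abs_of_nonneg (inv_nonneg.mpr ht.le)]
    have h1 : s * t⁻¹ ≤ 1 := by
      rw [← div_eq_mul_inv]; exact div_le_one_of_le₀ hst ht.le
    nlinarith [norm_nonneg v, mul_nonneg hs0 (inv_nonneg.mpr ht.le)]
  have hx₀R : ‖x₀‖ ≤ R := by rw [hR]; exact le_max_left _ _
  have hx₁R : ‖x₁‖ ≤ R := by rw [hR]; exact le_max_right _ _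
  -- Step 1 : a priori bound on trajectories
  have hball : ∀ v : EuclideanSpace ℝ (Fin d), ‖v‖ ≤ 4 * R →
      ∀ s ∈ Icc (0:ℝ) t, ‖xv v s‖ ≤ 9 * R := by
    intro v hv
    by_contra hcon
    push_neg at hcon
    obtain ⟨s₀, hs₀, hs₀'⟩ := hcon
    set B : Set ℝ := Icc 0 t ∩ {s | 9 * R ≤ ‖xv v s‖} with hBdef
    have hBne : B.Nonempty := ⟨s₀, hs₀, hs₀'.le⟩
    have hBclosed : IsClosed B :=
      IsClosed.inter isClosed_Icc (isClosed_le continuous_const (hxcont v).norm)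
    have hBbdd : BddBelow B := ⟨0, fun s hs => hs.1.1⟩
    have hs'B : sInf B ∈ B := hBclosed.csInf_mem hBne hBbdd
    set s' := sInf B with hs'def
    have hs'pos : 0 < s' := by
      rcases lt_or_eq_of_le hs'B.1.1 with h | h
      · exact h
      · exfalso
        have : ‖xv v 0‖ ≤ R := by rw [hx0 v]; exact hx₀R
        have h9 : 9 * R ≤ ‖xv v 0‖ := by rw [h]; exact hs'B.2
        linarith
    have hless : ∀ s ∈ Ico (0:ℝ) s', ‖xv v s‖ ≤ 7 * R := by
      intro s hs
      have hsmem : s ∈ Icc (0:ℝ) t := ⟨hs.1, le_trans hs.2.le hs'B.1.2⟩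
      have hbnd : ∀ r ∈ Icc (0:ℝ) s, ‖-(gradient Φ (xv v r))‖ ≤ C9 := by
        intro r hr
        have hrlt : r < s' := lt_of_le_of_lt hr.2 hs.2
        have hrmem : r ∈ Icc (0:ℝ) t := ⟨hr.1, le_trans hrlt.le hs'B.1.2⟩
        have hrnB : r ∉ B := fun hrB => absurd (csInf_le hBbdd hrB) (not_le.mpr hrlt)
        have h9 : ‖xv v r‖ ≤ 9 * R := by
          by_contra h
          exact hrnB ⟨hrmem, (not_le.mp h).le⟩
        rw [norm_neg]; exact hC9bound _ h9
      have hI := integral_bound _ (hgx_cont v) hs.1 hbnd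
      have hI2 : ‖∫ r in (0:ℝ)..s, (s - r) • (-(gradient Φ (xv v r)))‖ ≤ 2 * R := by
        have hsq : s ^ 2 ≤ t ^ 2 := by nlinarith [hsmem.1, hsmem.2]
        have : C9 * s ^ 2 ≤ C9 * t ^ 2 := mul_le_mul_of_nonneg_left hsq hC9
        linarith
      rw [htay v s]
      calc ‖x₀ + s • (t⁻¹ • v) + ∫ r in (0:ℝ)..s, (s - r) • (-(gradient Φ (xv v r)))‖
          ≤ ‖x₀ + s • (t⁻¹ • v)‖ +
            ‖∫ r in (0:ℝ)..s, (s - r) • (-(gradient Φ (xv v r)))‖ := norm_add_le _ _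
        _ ≤ ‖x₀‖ + ‖s • (t⁻¹ • v)‖ +
            ‖∫ r in (0:ℝ)..s, (s - r) • (-(gradient Φ (xv v r)))‖ := by
              have := norm_add_le x₀ (s • (t⁻¹ • v)); linarith
        _ ≤ 7 * R := by
              have := hsm v s hs.1 hsmem.2
              linarith
    have hlim : ‖xv v s'‖ ≤ 7 * R := by
      apply le_of_tendsto
        (((hxcont v).norm.tendsto s').mono_left
          (nhdsWithin_le_nhds : nhdsWithin s' (Iio s') ≤ nhds s'))
      filter_upwards [Ioo_mem_nhdsLT_of_mem (⟨hs'pos, le_refl s'⟩ : s' ∈ Ioc 0 s')] with r hr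
      exact hless r ⟨hr.1.le, hr.2⟩
    have h9' : 9 * R ≤ ‖xv v s'‖ := hs'B.2
    linarith
  -- Step 2 : stability estimate for the difference of two trajectories
  have hdiff : ∀ v w : EuclideanSpace ℝ (Fin d), ‖v‖ ≤ 4 * R → ‖w‖ ≤ 4 * R →
      ∀ s ∈ Icc (0:ℝ) t, ‖xv v s - xv w s‖ ≤ 2 * ‖v - w‖ := by
    intro v w hv hw
    have hδcont : Continuous (fun s => ‖xv v s - xv w s‖) := ((hxcont v).sub (hxcont w)).norm
    obtain ⟨sm, hsm', hmax⟩ := isCompact_Icc.exists_isMaxOn (α := ℝ)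
      (⟨0, le_refl 0, ht.le⟩ : (Icc (0:ℝ) t).Nonempty) hδcont.continuousOn
    have hmax' : ∀ s ∈ Icc (0:ℝ) t, ‖xv v s - xv w s‖ ≤ ‖xv v sm - xv w sm‖ := fun s hs => hmax hs
    set M := ‖xv v sm - xv w sm‖ with hMdef
    have hMnn : 0 ≤ M := norm_nonneg _
    have hIsub : (∫ r in (0:ℝ)..sm, (sm - r) • (-(gradient Φ (xv v r)))) -
        (∫ r in (0:ℝ)..sm, (sm - r) • (-(gradient Φ (xv w r)))) =
        ∫ r in (0:ℝ)..sm, (sm - r) • (gradient Φ (xv w r) - gradient Φ (xv v r)) := by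
      have hint1 : IntervalIntegrable (fun r => (sm - r) • (-(gradient Φ (xv v r)))) volume 0 sm :=
        ((continuous_const.sub continuous_id).smul (hgx_cont v)).intervalIntegrable 0 sm
      have hint2 : IntervalIntegrable (fun r => (sm - r) • (-(gradient Φ (xv w r)))) volume 0 sm :=
        ((continuous_const.sub continuous_id).smul (hgx_cont w)).intervalIntegrable 0 sm
      rw [← intervalIntegral.integral_sub hint1 hint2]
      apply intervalIntegral.integral_congr
      intro r _
      simp [smul_sub, smul_neg]
      abel
    have hdelta : xv v sm - xv w sm = sm • (t⁻¹ • (v - w)) +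
        ∫ r in (0:ℝ)..sm, (sm - r) • (gradient Φ (xv w r) - gradient Φ (xv v r)) := by
      rw [htay v sm, htay w sm, ← hIsub, smul_sub, smul_sub]
      abel
    have hbnd : ∀ r ∈ Icc (0:ℝ) sm, ‖gradient Φ (xv w r) - gradient Φ (xv v r)‖ ≤ C * M := by
      intro r hr
      have hrI : r ∈ Icc (0:ℝ) t := ⟨hr.1, le_trans hr.2 hsm'.2⟩
      calc ‖gradient Φ (xv w r) - gradient Φ (xv v r)‖
          ≤ C * ‖xv w r - xv v r‖ := hlip _ _ (hball w hw r hrI) (hball v hv r hrI)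
        _ ≤ C * M := by
            apply mul_le_mul_of_nonneg_left _ hC
            rw [norm_sub_rev]
            exact hmax' r hrI
    have hIb := integral_bound (fun r => gradient Φ (xv w r) - gradient Φ (xv v r))
      (((hgradcont.comp (hxcont w)).sub (hgradcont.comp (hxcont v)))) hsm'.1 hbnd
    have hMle : M ≤ ‖v - w‖ + C * M * t ^ 2 / 2 := by
      have h1 : ‖sm • (t⁻¹ • (v - w))‖ ≤ ‖v - w‖ := hsm (v - w) sm hsm'.1 hsm'.2
      have h2 : C * M * sm ^ 2 / 2 ≤ C * M * t ^ 2 / 2 := by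
        have hsq : sm ^ 2 ≤ t ^ 2 := by nlinarith [hsm'.1, hsm'.2]
        have := mul_le_mul_of_nonneg_left hsq (mul_nonneg hC hMnn)
        nlinarith
      calc M = ‖xv v sm - xv w sm‖ := hMdef
        _ ≤ ‖sm • (t⁻¹ • (v - w))‖ +
            ‖∫ r in (0:ℝ)..sm, (sm - r) • (gradient Φ (xv w r) - gradient Φ (xv v r))‖ := by
              rw [hdelta]; exact norm_add_le _ _
        _ ≤ ‖v - w‖ + C * M * t ^ 2 / 2 := by linarith
    have hM2 : M ≤ 2 * ‖v - w‖ := by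
      have h1 : C * t ^ 2 * M ≤ (1 / 4) * M := mul_le_mul_of_nonneg_right hCt hMnn
      nlinarith [norm_nonneg (v - w)]
    intro s hs
    exact le_trans (hmax' s hs) hM2
  -- representation of the shooting map
  have hArep : ∀ v : EuclideanSpace ℝ (Fin d),
      v - X x₀ (t⁻¹ • v) t + x₁ =
      (x₁ - x₀) + ∫ r in (0:ℝ)..t, (t - r) • (gradient Φ (xv v r)) := by
    intro v
    have htt : t • (t⁻¹ • v) = v := by rw [smul_smul, mul_inv_cancel₀ htne, one_smul]
    have hnegint : (∫ r in (0:ℝ)..t, (t - r) • (-(gradient Φ (xv v r)))) =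
        -∫ r in (0:ℝ)..t, (t - r) • (gradient Φ (xv v r)) := by
      rw [← intervalIntegral.integral_neg]
      apply intervalIntegral.integral_congr
      intro r _
      simp [smul_neg]
    have h := htay v t
    rw [htt, hnegint] at h
    show v - xv v t + x₁ = _
    rw [h]
    abel
  -- the shooting map sends the ball of radius 4R to itself
  have hAball : ∀ v : EuclideanSpace ℝ (Fin d), ‖v‖ ≤ 4 * R →
      ‖v - X x₀ (t⁻¹ • v) t + x₁‖ ≤ 4 * R := by
    intro v hv
    rw [hArep v]
    have hbnd : ∀ r ∈ Icc (0:ℝ) t, ‖gradient Φ (xv v r)‖ ≤ C9 :=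
      fun r hr => hC9bound _ (hball v hv r hr)
    have hI := integral_bound (fun r => gradient Φ (xv v r))
      (hgradcont.comp (hxcont v)) ht.le hbnd
    have h01 : ‖x₁ - x₀‖ ≤ 2 * R := le_trans (norm_sub_le _ _) (by linarith)
    calc ‖(x₁ - x₀) + ∫ r in (0:ℝ)..t, (t - r) • (gradient Φ (xv v r))‖
        ≤ ‖x₁ - x₀‖ + ‖∫ r in (0:ℝ)..t, (t - r) • (gradient Φ (xv v r))‖ := norm_add_le _ _
      _ ≤ 4 * R := by linarith
  -- the shooting map is a contraction on the ball
  have hAcontr : ∀ v w : EuclideanSpace ℝ (Fin d), ‖v‖ ≤ 4 * R → ‖w‖ ≤ 4 * R →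
      ‖(v - X x₀ (t⁻¹ • v) t + x₁) - (w - X x₀ (t⁻¹ • w) t + x₁)‖ ≤ (1 / 2) * ‖v - w‖ := by
    intro v w hv hw
    rw [hArep v, hArep w]
    have hIsub : ((x₁ - x₀) + ∫ r in (0:ℝ)..t, (t - r) • (gradient Φ (xv v r))) -
        ((x₁ - x₀) + ∫ r in (0:ℝ)..t, (t - r) • (gradient Φ (xv w r))) =
        ∫ r in (0:ℝ)..t, (t - r) • (gradient Φ (xv v r) - gradient Φ (xv w r)) := by
      rw [add_sub_add_left_eq_sub]
      have hint1 : IntervalIntegrable (fun r => (t - r) • (gradient Φ (xv v r))) volume 0 t :=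
        ((continuous_const.sub continuous_id).smul (hgradcont.comp (hxcont v))).intervalIntegrable 0 t
      have hint2 : IntervalIntegrable (fun r => (t - r) • (gradient Φ (xv w r))) volume 0 t :=
        ((continuous_const.sub continuous_id).smul (hgradcont.comp (hxcont w))).intervalIntegrable 0 t
      rw [← intervalIntegral.integral_sub hint1 hint2]
      have : ∀ r ∈ uIcc (0:ℝ) t, (t - r) • (gradient Φ (xv v r)) - (t - r) • (gradient Φ (xv w r))
          = (t - r) • (gradient Φ (xv v r) - gradient Φ (xv w r)) := by
        intro r _; rw [smul_sub]
      rw [intervalIntegral.integral_congr (fun r hr => (this r hr))]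
    rw [hIsub]
    have hbnd : ∀ r ∈ Icc (0:ℝ) t,
        ‖gradient Φ (xv v r) - gradient Φ (xv w r)‖ ≤ C * (2 * ‖v - w‖) := by
      intro r hr
      calc ‖gradient Φ (xv v r) - gradient Φ (xv w r)‖
          ≤ C * ‖xv v r - xv w r‖ := hlip _ _ (hball v hv r hr) (hball w hw r hr)
        _ ≤ C * (2 * ‖v - w‖) :=
            mul_le_mul_of_nonneg_left (hdiff v w hv hw r hr) hC
    have hI := integral_bound (fun r => gradient Φ (xv v r) - gradient Φ (xv w r))
      ((hgradcont.comp (hxcont v)).sub (hgradcont.comp (hxcont w))) ht.le hbnd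
    have h1 : C * t ^ 2 * ‖v - w‖ ≤ (1 / 4) * ‖v - w‖ :=
      mul_le_mul_of_nonneg_right hCt (norm_nonneg _)
    nlinarith [norm_nonneg (v - w)]
  -- Banach fixed point
  have h4R : (0 : ℝ) ≤ 4 * R := by linarith
  haveI : Nonempty (Metric.closedBall (0 : EuclideanSpace ℝ (Fin d)) (4 * R)) :=
    ⟨⟨0, Metric.mem_closedBall_self h4R⟩⟩
  haveI : CompleteSpace (Metric.closedBall (0 : EuclideanSpace ℝ (Fin d)) (4 * R)) :=
    Metric.isClosed_closedBall.completeSpace_coe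
  set f : Metric.closedBall (0 : EuclideanSpace ℝ (Fin d)) (4 * R) →
      Metric.closedBall (0 : EuclideanSpace ℝ (Fin d)) (4 * R) :=
    fun p => ⟨p.1 - X x₀ (t⁻¹ • p.1) t + x₁, by
      rw [Metric.mem_closedBall, dist_zero_right]
      exact hAball p.1 (by
        have := p.2
        rwa [Metric.mem_closedBall, dist_zero_right] at this)⟩ with hfdef
  have hcontracting : ContractingWith (1/2 : NNReal) f := by
    constructor
    · rw [← NNReal.coe_lt_coe]; norm_num
    · apply LipschitzWith.of_dist_le_mul
      intro a b
      simp only [Subtype.dist_eq, dist_eq_norm]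
      have h := hAcontr a.1 b.1
        (by have := a.2; rwa [Metric.mem_closedBall, dist_zero_right] at this)
        (by have := b.2; rwa [Metric.mem_closedBall, dist_zero_right] at this)
      calc ‖(f a).1 - (f b).1‖ ≤ (1/2) * ‖a.1 - b.1‖ := h
        _ = ((1/2 : NNReal) : ℝ) * ‖a.1 - b.1‖ := by norm_num
  set p := ContractingWith.fixedPoint f hcontracting with hpdef
  have hp : f p = p := hcontracting.fixedPoint_isFixedPt
  refine ⟨p.1, by
    have := p.2; rwa [Metric.mem_closedBall, dist_zero_right] at this, ?_⟩
  have hpeq : p.1 - X x₀ (t⁻¹ • p.1) t + x₁ = p.1 := congrArg Subtype.val hp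
  have h4 : x₁ - X x₀ (t⁻¹ • p.1) t = 0 := by
    have h5 : (p.1 - X x₀ (t⁻¹ • p.1) t + x₁) - p.1 = p.1 - p.1 := by rw [hpeq]
    calc x₁ - X x₀ (t⁻¹ • p.1) t = (p.1 - X x₀ (t⁻¹ • p.1) t + x₁) - p.1 := by abel
      _ = p.1 - p.1 := h5
      _ = 0 := sub_self _
  exact (sub_eq_zero.mp h4).symm
end
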